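/- arXiv:2412.01727 — 2 statements merged into one kernel-verified Lean document; each statement's English description precedes it below -/
import Mathlib

section
/- Let (a₀,a₁,a₂,a₃) : ℝ → (ℝ³)⁴ be smooth curves such that for all t the corresponding hyper-dual vector lies on S²_{D₂} (i.e. |a₀| = 1, a₀·a₁ = a₀·a₂ = 0, a₀·a₃ = −a₁·a₂). Then the dual number det((A×A*)', A', A) (computed with dual vector operations, A = a₀ + ε a₁, A* = a₂ + ε a₃) vanishes for all t if and only if a₀'·a₂' = 0 and a₀'·a₃' = −a₁'·a₂' for all t. -/
open Matrix

/-- Euclidean norm of a vector in `ℝ³`. -/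
noncomputable def n3 (a : Fin 3 → ℝ) : ℝ := Real.sqrt (a ⬝ᵥ a)

/-- A dual vector `A = a + ε a*` as the pair `(a, a*)`. -/
abbrev DualVec := (Fin 3 → ℝ) × (Fin 3 → ℝ)

/-- A hyper-dual vector `A₂ = A + ε* A*` as a pair of dual vectors. -/
abbrev HDualVec := DualVec × DualVec

/-- Dual inner product `⟨A,B⟩ = a·b + ε(a*·b + a·b*)`, a dual number. -/
noncomputable def dInner (A B : DualVec) : ℝ × ℝ :=
  (A.1 ⬝ᵥ B.1, A.2 ⬝ᵥ B.1 + A.1 ⬝ᵥ B.2)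

/-- Dual cross product `A×B = a×b + ε(a×b* + a*×b)`. -/
noncomputable def dCross (A B : DualVec) : DualVec :=
  (A.1 ⨯₃ B.1, A.1 ⨯₃ B.2 + A.2 ⨯₃ B.1)

/-- Dual norm `|A| = |a₀| + ε (a₀·a₁)/|a₀|`. -/
noncomputable def dnorm (A : DualVec) : ℝ × ℝ := (n3 A.1, (A.1 ⬝ᵥ A.2) / n3 A.1)

/-- Division of dual numbers: `(p + εq)/(r + εs) = p/r + ε (qr − ps)/r²`. -/
noncomputable def ddiv (x y : ℝ × ℝ) : ℝ × ℝ :=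
  (x.1 / y.1, (x.2 * y.1 - x.1 * y.2) / (y.1 ^ 2))

/-- Hyper-dual inner product `⟨A₂,B₂⟩₂ = ⟨A,B⟩ + ε*(⟨A,B*⟩ + ⟨A*,B⟩)`. -/
noncomputable def hInner (A B : HDualVec) : (ℝ × ℝ) × (ℝ × ℝ) :=
  (dInner A.1 B.1, dInner A.1 B.2 + dInner A.2 B.1)

/-- Hyper-dual cross product `A₂ ×₂ B₂ = A×B + ε*(A×B* + A*×B)`. -/
noncomputable def hCross (A B : HDualVec) : HDualVec :=
  (dCross A.1 B.1, dCross A.1 B.2 + dCross A.2 B.1)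

/-- Hyper-dual norm `|A₂| = |A| + ε* ⟨A,A*⟩/|A|`, a hyper-dual number. -/
noncomputable def hnorm (A : HDualVec) : (ℝ × ℝ) × (ℝ × ℝ) :=
  (dnorm A.1, ddiv (dInner A.1 A.2) (dnorm A.1))

/-- Dual determinant `det(A,B,C) = ⟨A, B×C⟩`, a dual number. -/
noncomputable def ddet (A B C : DualVec) : ℝ × ℝ := dInner A (dCross B C)


lemma hasDerivAt_cross3 {f g : ℝ → Fin 3 → ℝ} {f' g' : Fin 3 → ℝ} {t : ℝ}
    (hf : HasDerivAt f f' t) (hg : HasDerivAt g g' t) :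
    HasDerivAt (fun s => f s ⨯₃ g s) (f' ⨯₃ g t + f t ⨯₃ g') t := by
  have hf' := hasDerivAt_pi.mp hf
  have hg' := hasDerivAt_pi.mp hg
  rw [hasDerivAt_pi]
  intro i
  fin_cases i <;> simp [cross_apply]
  · convert (((hf' 1).mul (hg' 2)).sub ((hf' 2).mul (hg' 1))) using 1; exacts [rfl, by ring]
  · convert (((hf' 2).mul (hg' 0)).sub ((hf' 0).mul (hg' 2))) using 1; exacts [rfl, by ring]
  · convert (((hf' 0).mul (hg' 1)).sub ((hf' 1).mul (hg' 0))) using 1; exacts [rfl, by ring]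

lemma hasDerivAt_dot3 {f g : ℝ → Fin 3 → ℝ} {f' g' : Fin 3 → ℝ} {t : ℝ}
    (hf : HasDerivAt f f' t) (hg : HasDerivAt g g' t) :
    HasDerivAt (fun s => f s ⬝ᵥ g s) (f' ⬝ᵥ g t + f t ⬝ᵥ g') t := by
  have hf' := hasDerivAt_pi.mp hf
  have hg' := hasDerivAt_pi.mp hg
  simp only [dotProduct, Fin.sum_univ_three]
  convert ((((hf' 0).mul (hg' 0)).add ((hf' 1).mul (hg' 1))).add ((hf' 2).mul (hg' 2))) using 1
  exacts [rfl, rfl, rfl, by ring]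


/-- For a smooth curve `(a₀,a₁,a₂,a₃)` on the hyper-dual unit sphere `S²_{D₂}`, the
dual number `det((A×A*)', A', A)` vanishes for all `t` iff `a₀'·a₂' = 0` and
`a₀'·a₃' = −a₁'·a₂'` for all `t` (the developability condition). -/
theorem developable_iff (a0 a1 a2 a3 : ℝ → Fin 3 → ℝ)
    (h0 : ContDiff ℝ (⊤ : ℕ∞) a0) (h1 : ContDiff ℝ (⊤ : ℕ∞) a1)
    (h2 : ContDiff ℝ (⊤ : ℕ∞) a2) (h3 : ContDiff ℝ (⊤ : ℕ∞) a3)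
    (hs : ∀ t, n3 (a0 t) = 1 ∧ a0 t ⬝ᵥ a1 t = 0 ∧ a0 t ⬝ᵥ a2 t = 0 ∧
      a0 t ⬝ᵥ a3 t = -(a1 t ⬝ᵥ a2 t)) :
    (∀ t, ddet
        (deriv (fun s => dCross (a0 s, a1 s) (a2 s, a3 s)) t)
        (deriv (fun s => ((a0 s, a1 s) : DualVec)) t)
        (a0 t, a1 t) = ((0 : ℝ), (0 : ℝ))) ↔
      (∀ t, deriv a0 t ⬝ᵥ deriv a2 t = 0 ∧
        deriv a0 t ⬝ᵥ deriv a3 t = -(deriv a1 t ⬝ᵥ deriv a2 t)) := by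
  have key : ∀ t, ddet
        (deriv (fun s => dCross (a0 s, a1 s) (a2 s, a3 s)) t)
        (deriv (fun s => ((a0 s, a1 s) : DualVec)) t)
        (a0 t, a1 t)
      = (-(deriv a0 t ⬝ᵥ deriv a2 t),
         -(deriv a0 t ⬝ᵥ deriv a3 t + deriv a1 t ⬝ᵥ deriv a2 t)) := by
    intro t
    have hd0 : HasDerivAt a0 (deriv a0 t) t := (h0.differentiable (by simp) t).hasDerivAt
    have hd1 : HasDerivAt a1 (deriv a1 t) t := (h1.differentiable (by simp) t).hasDerivAt
    have hd2 : HasDerivAt a2 (deriv a2 t) t := (h2.differentiable (by simp) t).hasDerivAt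
    have hd3 : HasDerivAt a3 (deriv a3 t) t := (h3.differentiable (by simp) t).hasDerivAt
    set b0 := deriv a0 t
    set b1 := deriv a1 t
    set b2 := deriv a2 t
    set b3 := deriv a3 t
    -- pointwise constraints
    have hc1 : ∀ s, a0 s ⬝ᵥ a0 s = 1 := fun s => by
      have := (hs s).1
      rw [n3, Real.sqrt_eq_one] at this
      exact this
    have hc2 := fun s => (hs s).2.1
    have hc3 := fun s => (hs s).2.2.1
    have hc4 : ∀ s, a0 s ⬝ᵥ a3 s + a1 s ⬝ᵥ a2 s = 0 := fun s => by
      have := (hs s).2.2.2; linarith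
    -- derivative of constraints
    have dconst : ∀ (f g : ℝ → Fin 3 → ℝ), HasDerivAt f b0 t → True → True → True := fun _ _ _ _ _ => trivial
    have e1 : b0 ⬝ᵥ a0 t + a0 t ⬝ᵥ b0 = 0 := by
      have h1' : HasDerivAt (fun s => a0 s ⬝ᵥ a0 s) (b0 ⬝ᵥ a0 t + a0 t ⬝ᵥ b0) t :=
        hasDerivAt_dot3 hd0 hd0
      have h2' : HasDerivAt (fun s => a0 s ⬝ᵥ a0 s) 0 t := by
        have : (fun s => a0 s ⬝ᵥ a0 s) = fun _ => (1:ℝ) := funext hc1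
        rw [this]; exact hasDerivAt_const t 1
      exact h1'.unique h2'
    have e2 : b0 ⬝ᵥ a1 t + a0 t ⬝ᵥ b1 = 0 := by
      have h1' := hasDerivAt_dot3 hd0 hd1
      have h2' : HasDerivAt (fun s => a0 s ⬝ᵥ a1 s) 0 t := by
        have : (fun s => a0 s ⬝ᵥ a1 s) = fun _ => (0:ℝ) := funext hc2
        rw [this]; exact hasDerivAt_const t 0
      exact h1'.unique h2'
    have e3 : b0 ⬝ᵥ a2 t + a0 t ⬝ᵥ b2 = 0 := by
      have h1' := hasDerivAt_dot3 hd0 hd2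
      have h2' : HasDerivAt (fun s => a0 s ⬝ᵥ a2 s) 0 t := by
        have : (fun s => a0 s ⬝ᵥ a2 s) = fun _ => (0:ℝ) := funext hc3
        rw [this]; exact hasDerivAt_const t 0
      exact h1'.unique h2'
    -- compute the two derivatives
    have hD : deriv (fun s => dCross (a0 s, a1 s) (a2 s, a3 s)) t
        = (b0 ⨯₃ a2 t + a0 t ⨯₃ b2,
           (b0 ⨯₃ a3 t + a0 t ⨯₃ b3) + (b1 ⨯₃ a2 t + a1 t ⨯₃ b2)) := by
      have : HasDerivAt (fun s => dCross (a0 s, a1 s) (a2 s, a3 s))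
          (b0 ⨯₃ a2 t + a0 t ⨯₃ b2,
           (b0 ⨯₃ a3 t + a0 t ⨯₃ b3) + (b1 ⨯₃ a2 t + a1 t ⨯₃ b2)) t := by
        simp only [dCross]
        exact (hasDerivAt_cross3 hd0 hd2).prodMk
          ((hasDerivAt_cross3 hd0 hd3).add (hasDerivAt_cross3 hd1 hd2))
      exact this.deriv
    have hB : deriv (fun s => ((a0 s, a1 s) : DualVec)) t = (b0, b1) :=
      (hd0.prodMk hd1).deriv
    rw [hD, hB]
    -- now a pure algebraic identity
    have hc1t := hc1 t; have hc2t := hc2 t; have hc3t := hc3 t; have hc4t := hc4 t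
    clear hd0 hd1 hd2 hd3 hD hB hc1 hc2 hc3 hc4 hs dconst
    simp only [ddet, dInner, dCross, Prod.mk.injEq]
    simp only [dotProduct, cross_apply, Fin.sum_univ_three, Pi.add_apply,
      Matrix.cons_val_zero, Matrix.cons_val_one, Matrix.head_cons,
      Matrix.cons_val_two, Matrix.tail_cons] at *
    constructor
    · linear_combination (b0 0 * b0 0 + b0 1 * b0 1 + b0 2 * b0 2) * hc3t
        + (b2 0 * a0 t 0 + b2 1 * a0 t 1 + b2 2 * a0 t 2
           - (a2 t 0 * b0 0 + a2 t 1 * b0 1 + a2 t 2 * b0 2)) * (e1 / 2)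
        - (b2 0 * b0 0 + b2 1 * b0 1 + b2 2 * b0 2) * hc1t
    · linear_combination (b0 0 * b0 0 + b0 1 * b0 1 + b0 2 * b0 2) * hc4t
        + (b3 0 * a0 t 0 + b3 1 * a0 t 1 + b3 2 * a0 t 2
           + b2 0 * a1 t 0 + b2 1 * a1 t 1 + b2 2 * a1 t 2
           - (a3 t 0 * b0 0 + a3 t 1 * b0 1 + a3 t 2 * b0 2)
           - (a2 t 0 * b1 0 + a2 t 1 * b1 1 + a2 t 2 * b1 2)) * (e1 / 2)
        + 2 * (b0 0 * b1 0 + b0 1 * b1 1 + b0 2 * b1 2) * hc3t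
        - (b3 0 * b0 0 + b3 1 * b0 1 + b3 2 * b0 2
           + b2 0 * b1 0 + b2 1 * b1 1 + b2 2 * b1 2) * hc1t
        - 2 * (b2 0 * b0 0 + b2 1 * b0 1 + b2 2 * b0 2) * hc2t
        + (b2 0 * a0 t 0 + b2 1 * a0 t 1 + b2 2 * a0 t 2
           - (a2 t 0 * b0 0 + a2 t 1 * b0 1 + a2 t 2 * b0 2)) * e2
  constructor
  · intro h t
    have hk := key t
    rw [h t] at hk
    have h1 := congrArg Prod.fst hk
    have h2 := congrArg Prod.snd hk
    simp only at h1 h2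
    constructor <;> linarith [h1, h2]
  · intro h t
    rw [key t]
    obtain ⟨h1, h2⟩ := h t
    rw [h1, h2]
    norm_num
end

section
/- Let a₀, a₁, a₂, a₃ ∈ ℝ³ satisfy |a₀| = |a₂| = 1, a₀·a₁ = a₀·a₂ = a₂·a₃ = 0, and a₀·a₃ = −a₁·a₂. Set f = (a₂ × a₃)·a₀ and g = (a₀ × a₁)·a₂. Then a₀ × a₁ + f a₀ = a₂ × a₃ + g a₂. -/
/-!
Since `a₀` and `a₂` are orthonormal, `a₀, a₂, a₀ × a₂` is a basis of `ℝ³`, so it suffices to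
compare the dot products of both sides with these three vectors. Against `a₀` and `a₂` both
sides give `f` and `g`; against `a₀ × a₂` the Binet–Cauchy identity gives `a₁·a₂` on the left
and `-a₀·a₃` on the right, which agree by the last constraint.
-/

open Matrix

theorem eq_of_dotProduct_eq_of_triple_product_ne_zero {R : Type*} [CommRing R] [NoZeroDivisors R]
    {u v w x y : Fin 3 → R} (huvw : u ⬝ᵥ v ⨯₃ w ≠ 0)
    (hu : u ⬝ᵥ x = u ⬝ᵥ y) (hv : v ⬝ᵥ x = v ⬝ᵥ y) (hw : w ⬝ᵥ x = w ⬝ᵥ y) : x = y := by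
  rw [triple_product_eq_det] at huvw
  refine mulVec_injective_of_det_ne_zero huvw ?_
  ext i
  fin_cases i <;> simpa [mulVec]

theorem eq_of_dotProduct_eq_of_orthonormal {R : Type*} [CommRing R] [IsDomain R]
    {u v x y : Fin 3 → R} (hu : u ⬝ᵥ u = 1) (hv : v ⬝ᵥ v = 1) (huv : u ⬝ᵥ v = 0)
    (hxu : u ⬝ᵥ x = u ⬝ᵥ y) (hxv : v ⬝ᵥ x = v ⬝ᵥ y) (hxn : u ⨯₃ v ⬝ᵥ x = u ⨯₃ v ⬝ᵥ y) :
    x = y := by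
  refine eq_of_dotProduct_eq_of_triple_product_ne_zero ?_ hxu hxv hxn
  rw [triple_product_permutation, triple_product_permutation, cross_dot_cross, hu, hv, huv]
  simp

theorem common_base_curve_general (a0 a1 a2 a3 : Fin 3 → ℝ)
    (h0 : n3 a0 = 1) (h2 : n3 a2 = 1)
    (h02 : a0 ⬝ᵥ a2 = 0)
    (h03 : a0 ⬝ᵥ a3 = -(a1 ⬝ᵥ a2)) :
    a0 ⨯₃ a1 + ((a2 ⨯₃ a3) ⬝ᵥ a0) • a0 = a2 ⨯₃ a3 + ((a0 ⨯₃ a1) ⬝ᵥ a2) • a2 := by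
  have h00 : a0 ⬝ᵥ a0 = 1 := Real.sqrt_eq_one.mp h0
  have h22 : a2 ⬝ᵥ a2 = 1 := Real.sqrt_eq_one.mp h2
  have h20 : a2 ⬝ᵥ a0 = 0 := by rw [dotProduct_comm, h02]
  apply eq_of_dotProduct_eq_of_orthonormal h00 h22 h02
  · simp only [dotProduct_add, dotProduct_smul, smul_eq_mul, dot_self_cross, h00, h02]
    rw [dotProduct_comm]
    ring
  · simp only [dotProduct_add, dotProduct_smul, smul_eq_mul, dot_self_cross, h22, h20]
    rw [dotProduct_comm]
    ring
  · have hn0 : a0 ⨯₃ a2 ⬝ᵥ a0 = 0 := by rw [dotProduct_comm, dot_self_cross]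
    have hn2 : a0 ⨯₃ a2 ⬝ᵥ a2 = 0 := by rw [dotProduct_comm, dot_cross_self]
    simp only [dotProduct_add, dotProduct_smul, smul_eq_mul, cross_dot_cross, hn0, hn2, h00, h22,
      h02, h20, h03]
    rw [dotProduct_comm a2 a1]
    ring

/-- For `(a₀,a₁,a₂,a₃)` on `US²_{D₂}`, with `f = (a₂×a₃)·a₀` and `g = (a₀×a₁)·a₂`,
the two base curves coincide: `a₀×a₁ + f a₀ = a₂×a₃ + g a₂`. -/
theorem common_base_curve (a0 a1 a2 a3 : Fin 3 → ℝ)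
    (h0 : n3 a0 = 1) (h2 : n3 a2 = 1)
    (h01 : a0 ⬝ᵥ a1 = 0) (h02 : a0 ⬝ᵥ a2 = 0) (h23 : a2 ⬝ᵥ a3 = 0)
    (h03 : a0 ⬝ᵥ a3 = -(a1 ⬝ᵥ a2)) :
    a0 ⨯₃ a1 + ((a2 ⨯₃ a3) ⬝ᵥ a0) • a0 = a2 ⨯₃ a3 + ((a0 ⨯₃ a1) ⬝ᵥ a2) • a2 :=
  common_base_curve_general a0 a1 a2 a3 h0 h2 h02 h03
end
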